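/- arXiv:2209.13701 — 3 statements merged into one kernel-verified Lean document; each statement's English description precedes it below -/
import Mathlib

section
/- If v = (v_1, v_2) ∈ R^{n_a} × R^{n_b} is an eigenvector of L_blk with eigenvalue λ, then the vector (1_{n_a}^T v_1, 1_{n_b}^T v_2) ∈ R^2 satisfies the 2×2 linear system [[n_b β - λ, -n_a β],[-n_b β, n_a β - λ]](1_{n_a}^T v_1, 1_{n_b}^T v_2)^T = 0. -/
open Matrix

/-- Block adjacency matrix: `α` on the two diagonal blocks, `β` off-diagonal. -/
noncomputable def Ablk (na nb : ℕ) (α β : ℝ) : Matrix (Fin (na+nb)) (Fin (na+nb)) ℝ :=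
  Matrix.of fun i j => if ((i : ℕ) < na ↔ (j : ℕ) < na) then α else β

/-- Block Laplacian `D - A` with `D = diag(A·1)`. -/
noncomputable def Lblk (na nb : ℕ) (α β : ℝ) : Matrix (Fin (na+nb)) (Fin (na+nb)) ℝ :=
  Matrix.diagonal (Ablk na nb α β *ᵥ fun _ => (1 : ℝ)) - Ablk na nb α β

theorem stmt3 (na nb : ℕ) (hna : 1 ≤ na) (hnb : 1 ≤ nb) (α β lam : ℝ)
    (v : Fin (na+nb) → ℝ) (hv0 : v ≠ 0)
    (heig : Lblk na nb α β *ᵥ v = lam • v) :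
    !![(nb : ℝ) * β - lam, -((na : ℝ) * β); -((nb : ℝ) * β), (na : ℝ) * β - lam] *ᵥ
      ![∑ i ∈ Finset.univ.filter (fun i : Fin (na+nb) => (i : ℕ) < na), v i,
        ∑ i ∈ Finset.univ.filter (fun i : Fin (na+nb) => ¬ (i : ℕ) < na), v i] = 0 := by
  classical
  set T1 : Finset (Fin (na+nb)) := Finset.univ.filter (fun i => (i : ℕ) < na) with hT1
  set T2 : Finset (Fin (na+nb)) := Finset.univ.filter (fun i => ¬ (i : ℕ) < na) with hT2
  set S1 := ∑ i ∈ T1, v i with hS1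
  set S2 := ∑ i ∈ T2, v i with hS2
  have hcard1 : T1.card = na := by
    have : T1 = (Finset.range na).attachFin (fun m hm => by
      rw [Finset.mem_range] at hm; omega) := by
      ext i
      simp [hT1, Finset.mem_attachFin]
    rw [this, Finset.card_attachFin, Finset.card_range]
  have hcard2 : T2.card = nb := by
    have h := Finset.card_filter_add_card_filter_not
      (s := (Finset.univ : Finset (Fin (na+nb)))) (p := fun i => (i : ℕ) < na)
    simp only [Finset.card_univ, Fintype.card_fin] at h
    rw [← hT1, ← hT2] at h
    omega
  -- value of A *ᵥ v
  have hsplit : ∀ f : Fin (na+nb) → ℝ, ∑ j, f j = ∑ j ∈ T1, f j + ∑ j ∈ T2, f j := by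
    intro f
    rw [hT1, hT2, Finset.sum_filter_add_sum_filter_not]
  have hAv : ∀ i : Fin (na+nb), (Ablk na nb α β *ᵥ v) i =
      (if (i:ℕ) < na then α * S1 + β * S2 else β * S1 + α * S2) := by
    intro i
    simp only [Ablk, mulVec, dotProduct, Matrix.of_apply]
    rw [hsplit]
    have e1 : ∑ j ∈ T1, (if ((i:ℕ) < na ↔ (j:ℕ) < na) then α else β) * v j
        = (if (i:ℕ) < na then α else β) * S1 := by
      rw [hS1, Finset.mul_sum]
      refine Finset.sum_congr rfl fun j hj => ?_
      rw [hT1, Finset.mem_filter] at hj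
      by_cases hi : (i:ℕ) < na <;> simp [hi, hj.2]
    have e2 : ∑ j ∈ T2, (if ((i:ℕ) < na ↔ (j:ℕ) < na) then α else β) * v j
        = (if (i:ℕ) < na then β else α) * S2 := by
      rw [hS2, Finset.mul_sum]
      refine Finset.sum_congr rfl fun j hj => ?_
      rw [hT2, Finset.mem_filter] at hj
      by_cases hi : (i:ℕ) < na <;> simp [hi, hj.2]
    rw [e1, e2]
    by_cases hi : (i:ℕ) < na <;> simp [hi]
  have hA1 : ∀ i : Fin (na+nb), (Ablk na nb α β *ᵥ fun _ => (1:ℝ)) i =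
      (if (i:ℕ) < na then (na:ℝ) * α + (nb:ℝ) * β else (na:ℝ) * β + (nb:ℝ) * α) := by
    intro i
    simp only [Ablk, mulVec, dotProduct, Matrix.of_apply, mul_one]
    rw [hsplit]
    have e1 : ∑ _j ∈ T1, (if ((i:ℕ) < na ↔ (_j:ℕ) < na) then α else β)
        = (na:ℝ) * (if (i:ℕ) < na then α else β) := by
      rw [Finset.sum_congr rfl (fun j hj => ?_), Finset.sum_const, hcard1,
        nsmul_eq_mul]
      rw [hT1, Finset.mem_filter] at hj
      by_cases hi : (i:ℕ) < na <;> simp [hi, hj.2]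
    have e2 : ∑ _j ∈ T2, (if ((i:ℕ) < na ↔ (_j:ℕ) < na) then α else β)
        = (nb:ℝ) * (if (i:ℕ) < na then β else α) := by
      rw [Finset.sum_congr rfl (fun j hj => ?_), Finset.sum_const, hcard2,
        nsmul_eq_mul]
      rw [hT2, Finset.mem_filter] at hj
      by_cases hi : (i:ℕ) < na <;> simp [hi, hj.2]
    rw [e1, e2]
    by_cases hi : (i:ℕ) < na <;> simp [hi] <;> ring
  have heq : ∀ i : Fin (na+nb),
      (Ablk na nb α β *ᵥ fun _ => (1:ℝ)) i * v i - (Ablk na nb α β *ᵥ v) i = lam * v i := by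
    intro i
    have := congrFun heig i
    simpa [Lblk, sub_mulVec, mulVec_diagonal] using this
  have eq1 : ((na:ℝ) * α + (nb:ℝ) * β) * S1 - (na:ℝ) * (α * S1 + β * S2) = lam * S1 := by
    have h := Finset.sum_congr rfl (fun i (hi : i ∈ T1) => heq i)
    rw [Finset.sum_sub_distrib] at h
    have h1 : ∑ i ∈ T1, (Ablk na nb α β *ᵥ fun _ => (1:ℝ)) i * v i
        = ((na:ℝ) * α + (nb:ℝ) * β) * S1 := by
      rw [hS1, Finset.mul_sum]
      refine Finset.sum_congr rfl fun i hi => ?_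
      rw [hT1, Finset.mem_filter] at hi
      rw [hA1, if_pos hi.2]
    have h2 : ∑ i ∈ T1, (Ablk na nb α β *ᵥ v) i = (na:ℝ) * (α * S1 + β * S2) := by
      rw [Finset.sum_congr rfl (fun i hi => ?_), Finset.sum_const, hcard1, nsmul_eq_mul]
      rw [hT1, Finset.mem_filter] at hi
      rw [hAv, if_pos hi.2]
    rw [h1, h2, ← Finset.mul_sum, ← hS1] at h
    exact h
  have eq2 : ((na:ℝ) * β + (nb:ℝ) * α) * S2 - (nb:ℝ) * (β * S1 + α * S2) = lam * S2 := by
    have h := Finset.sum_congr rfl (fun i (hi : i ∈ T2) => heq i)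
    rw [Finset.sum_sub_distrib] at h
    have h1 : ∑ i ∈ T2, (Ablk na nb α β *ᵥ fun _ => (1:ℝ)) i * v i
        = ((na:ℝ) * β + (nb:ℝ) * α) * S2 := by
      rw [hS2, Finset.mul_sum]
      refine Finset.sum_congr rfl fun i hi => ?_
      rw [hT2, Finset.mem_filter] at hi
      rw [hA1, if_neg hi.2]
    have h2 : ∑ i ∈ T2, (Ablk na nb α β *ᵥ v) i = (nb:ℝ) * (β * S1 + α * S2) := by
      rw [Finset.sum_congr rfl (fun i hi => ?_), Finset.sum_const, hcard2, nsmul_eq_mul]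
      rw [hT2, Finset.mem_filter] at hi
      rw [hAv, if_neg hi.2]
    rw [h1, h2, ← Finset.mul_sum, ← hS2] at h
    exact h
  funext i
  fin_cases i <;>
    simp [Matrix.mulVec, dotProduct, Fin.sum_univ_succ]
  · linear_combination eq1
  · linear_combination eq2
end

section
/- Every eigenvalue of the block Laplacian L_blk belongs to the set {0, (n_a+n_b)β, n_a α + n_b β, n_b α + n_a β}. -/
open Matrix

/-!
On each block the eigenvalue equation reads `(d - λ) vᵢ = c`, where `d` is the common row sum
of the block and `c` is the same for all of its rows (`α Sₐ + β S_b`, resp. `β Sₐ + α S_b`, with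
`Sₐ`, `S_b` the block sums of `v`). If `λ` is neither row sum, `v` is thus determined by
`(Sₐ, S_b)`, which is nonzero, and summing over each block shows that it is an eigenvector of
`β [[n_b, -n_a], [-n_b, n_a]]` for `λ`, whose eigenvalues are `0` and `(n_a + n_b) β`.
-/

open Finset Fintype

section BlockMatrices

variable {na nb : ℕ} {α β : ℝ}

theorem Ablk_mulVec_castAdd (w : Fin (na + nb) → ℝ) (i : Fin na) :
    (Ablk na nb α β *ᵥ w) (Fin.castAdd nb i) =
      α * ∑ j, w (Fin.castAdd nb j) + β * ∑ j, w (Fin.natAdd na j) := by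
  simp [Ablk, mulVec, dotProduct, Fin.sum_univ_add, Finset.mul_sum]

theorem Ablk_mulVec_natAdd (w : Fin (na + nb) → ℝ) (i : Fin nb) :
    (Ablk na nb α β *ᵥ w) (Fin.natAdd na i) =
      β * ∑ j, w (Fin.castAdd nb j) + α * ∑ j, w (Fin.natAdd na j) := by
  have (j : Fin na) : ¬ na ≤ (j : ℕ) := not_le.mpr j.isLt
  simp [Ablk, mulVec, dotProduct, Fin.sum_univ_add, Finset.mul_sum, this]

theorem Lblk_mulVec_append_castAdd (x : Fin na → ℝ) (y : Fin nb → ℝ) (i : Fin na) :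
    (Lblk na nb α β *ᵥ Fin.append x y) (Fin.castAdd nb i) =
      (na * α + nb * β) * x i - (α * ∑ j, x j + β * ∑ j, y j) := by
  simp only [Lblk, sub_mulVec, Pi.sub_apply, mulVec_diagonal, Ablk_mulVec_castAdd,
    Fin.append_left, Fin.append_right, sum_const, Finset.card_univ, Fintype.card_fin,
    nsmul_eq_mul, mul_one]
  ring

theorem Lblk_mulVec_append_natAdd (x : Fin na → ℝ) (y : Fin nb → ℝ) (i : Fin nb) :
    (Lblk na nb α β *ᵥ Fin.append x y) (Fin.natAdd na i) =
      (nb * α + na * β) * y i - (β * ∑ j, x j + α * ∑ j, y j) := by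
  simp only [Lblk, sub_mulVec, Pi.sub_apply, mulVec_diagonal, Ablk_mulVec_natAdd,
    Fin.append_left, Fin.append_right, sum_const, Finset.card_univ, Fintype.card_fin,
    nsmul_eq_mul, mul_one]
  ring

end BlockMatrices

theorem sub_mul_sub_eq_of_eigenpair {a b c d lam s t : ℝ} (h₁ : a * s + b * t = lam * s)
    (h₂ : c * s + d * t = lam * t) (hst : s ≠ 0 ∨ t ≠ 0) : (a - lam) * (d - lam) = b * c := by
  rcases hst with hs | ht
  · apply mul_right_cancel₀ hs
    linear_combination (d - lam) * h₁ - b * h₂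
  · apply mul_right_cancel₀ ht
    linear_combination (a - lam) * h₂ - c * h₁

theorem mul_sum_sub_card_mul_eq_of_forall {ι : Type*} [Fintype ι] {x : ι → ℝ} {d c lam : ℝ}
    (h : ∀ i, d * x i - c = lam * x i) : d * ∑ i, x i - card ι * c = lam * ∑ i, x i := by
  have := sum_congr rfl fun i (_ : i ∈ univ) => h i
  rwa [sum_sub_distrib, sum_const, Finset.card_univ, nsmul_eq_mul, ← mul_sum, ← mul_sum] at this

theorem eq_zero_of_forall_mul_eq_mul {ι : Type*} {x : ι → ℝ} {d lam : ℝ} (hd : lam ≠ d)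
    (h : ∀ i, d * x i = lam * x i) : x = 0 := by
  funext i
  have : (d - lam) * x i = 0 := by linear_combination h i
  simpa [sub_ne_zero.mpr hd.symm] using this

theorem eigenvalue_mem_of_block_equations {ι κ : Type*} [Fintype ι] [Fintype κ] {α β lam : ℝ}
    {x : ι → ℝ} {y : κ → ℝ} (hxy : x ≠ 0 ∨ y ≠ 0)
    (hx : ∀ i, (card ι * α + card κ * β) * x i - (α * ∑ j, x j + β * ∑ j, y j) = lam * x i)
    (hy : ∀ i, (card κ * α + card ι * β) * y i - (β * ∑ j, x j + α * ∑ j, y j) = lam * y i) :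
    lam ∈ ({0, ((card ι : ℝ) + card κ) * β, (card ι : ℝ) * α + card κ * β,
      (card κ : ℝ) * α + card ι * β} : Set ℝ) := by
  simp only [Set.mem_insert_iff, Set.mem_singleton_iff]
  by_cases ha : lam = card ι * α + card κ * β
  · tauto
  by_cases hb : lam = card κ * α + card ι * β
  · tauto
  have hS : ∑ j, x j ≠ 0 ∨ ∑ j, y j ≠ 0 := by
    by_contra! h0
    simp only [h0.1, h0.2, mul_zero, add_zero, sub_zero] at hx hy
    rcases hxy with hx0 | hy0
    · exact hx0 (eq_zero_of_forall_mul_eq_mul ha hx)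
    · exact hy0 (eq_zero_of_forall_mul_eq_mul hb hy)
  have hchar := sub_mul_sub_eq_of_eigenpair (a := card κ * β) (b := -(card ι * β))
    (c := -(card κ * β)) (d := card ι * β) (lam := lam) (s := ∑ j, x j) (t := ∑ j, y j)
    (by linear_combination mul_sum_sub_card_mul_eq_of_forall hx)
    (by linear_combination mul_sum_sub_card_mul_eq_of_forall hy) hS
  have : lam * (lam - (card ι + card κ) * β) = 0 := by linear_combination hchar
  rcases mul_eq_zero.mp this with h0 | h0
  · tauto
  · right; left; linarith

theorem stmt5_general (na nb : ℕ) (α β : ℝ) (lam : ℝ)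
    (h : ∃ v : Fin (na+nb) → ℝ, v ≠ 0 ∧ Lblk na nb α β *ᵥ v = lam • v) :
    lam ∈ ({0, ((na : ℝ) + nb) * β, (na : ℝ) * α + (nb : ℝ) * β,
      (nb : ℝ) * α + (na : ℝ) * β} : Set ℝ) := by
  obtain ⟨v, hv0, hv⟩ := h
  obtain ⟨x, y, rfl⟩ : ∃ x y, v = Fin.append x y := ⟨_, _, Fin.append_castAdd_natAdd.symm⟩
  have hxy : x ≠ 0 ∨ y ≠ 0 := by
    contrapose! hv0
    obtain ⟨rfl, rfl⟩ := hv0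
    funext i
    cases i using Fin.addCases <;> simp
  have hx (i : Fin na) :
      (na * α + nb * β) * x i - (α * ∑ j, x j + β * ∑ j, y j) = lam * x i := by
    simpa [Lblk_mulVec_append_castAdd] using congrFun hv (Fin.castAdd nb i)
  have hy (i : Fin nb) :
      (nb * α + na * β) * y i - (β * ∑ j, x j + α * ∑ j, y j) = lam * y i := by
    simpa [Lblk_mulVec_append_natAdd] using congrFun hv (Fin.natAdd na i)
  simpa using eigenvalue_mem_of_block_equations hxy (by simpa using hx) (by simpa using hy)

theorem stmt5 (na nb : ℕ) (hna : 1 ≤ na) (hnb : 1 ≤ nb) (α β : ℝ)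
    (hβ0 : 0 ≤ β) (hβα : β ≤ α) (lam : ℝ)
    (h : ∃ v : Fin (na+nb) → ℝ, v ≠ 0 ∧ Lblk na nb α β *ᵥ v = lam • v) :
    lam ∈ ({0, ((na : ℝ) + nb) * β, (na : ℝ) * α + (nb : ℝ) * β,
      (nb : ℝ) * α + (na : ℝ) * β} : Set ℝ) :=
  stmt5_general na nb α β lam h
end

section
/- Suppose H_2, H_o, H_d are complex matrix blocks with ‖H_2^{-1}‖ ≤ M_1, ‖H_o‖ ≤ M_2, and ‖H_d^{-1}‖ ≤ 1/(c - M_2) for some c with c > M_2 + M_1 M_2². Then the Schur complement S = H_2 - H_o^T H_d^{-1} H_o is invertible and ‖S^{-1}‖ ≤ (c - M_2) M_1 / (c - M_2 - M_1 M_2²). -/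
/-!
Write `S = H₂ - Hₒᵀ H_d⁻¹ Hₒ = H₂ (1 - E)` with `E = H₂⁻¹ Hₒᵀ H_d⁻¹ Hₒ`. Since the transpose has
the same spectral norm as the matrix, `‖E‖ ≤ M₁ M₂² / (c - M₂) < 1`, so `1 - E` is inverted by the
Neumann series and `‖S⁻¹‖ ≤ ‖H₂⁻¹‖ / (1 - ‖E‖)`, which is the claimed bound.
-/

open Matrix
open scoped Matrix.Norms.L2Operator Ring

theorem norm_ringInverse_one_sub_le {R : Type*} [NormedRing R] [HasSummableGeomSeries R]
    (hone : ‖(1 : R)‖ ≤ 1) {x : R} (hx : ‖x‖ < 1) : ‖(1 - x)⁻¹ʳ‖ ≤ (1 - ‖x‖)⁻¹ := by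
  rw [← geom_series_eq_inverse x hx]
  linarith [tsum_geometric_le_of_norm_lt_one x hx]

theorem isUnit_sub_and_norm_ringInverse_sub_le {R : Type*} [NormedRing R]
    [HasSummableGeomSeries R] (hone : ‖(1 : R)‖ ≤ 1) {a b : R} (ha : IsUnit a) {M δ : ℝ}
    (haM : ‖a⁻¹ʳ‖ ≤ M) (hbδ : ‖b‖ ≤ δ) (hMδ : M * δ < 1) :
    IsUnit (a - b) ∧ ‖(a - b)⁻¹ʳ‖ ≤ M / (1 - M * δ) := by
  set e := a⁻¹ʳ * b
  have hfac : a - b = a * (1 - e) := by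
    rw [mul_sub, mul_one, Ring.mul_inverse_cancel_left a b ha]
  have he : ‖e‖ ≤ M * δ :=
    (norm_mul_le _ _).trans (mul_le_mul haM hbδ (norm_nonneg _) ((norm_nonneg _).trans haM))
  have he1 : ‖e‖ < 1 := he.trans_lt hMδ
  refine ⟨hfac ▸ ha.mul (isUnit_one_sub_of_norm_lt_one he1), ?_⟩
  calc ‖(a - b)⁻¹ʳ‖ = ‖(1 - e)⁻¹ʳ * a⁻¹ʳ‖ := by rw [hfac, Ring.inverse_mul (.inl ha)]
    _ ≤ (1 - ‖e‖)⁻¹ * M :=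
      (norm_mul_le _ _).trans (mul_le_mul (norm_ringInverse_one_sub_le hone he1) haM
        (norm_nonneg _) (inv_nonneg.2 (sub_nonneg.2 he1.le)))
    _ ≤ (1 - M * δ)⁻¹ * M := by
      gcongr
      exact (norm_nonneg _).trans haM
    _ = M / (1 - M * δ) := by ring

theorem EuclideanSpace.norm_toLp_star {𝕜 n : Type*} [RCLike 𝕜] [Fintype n] (v : n → 𝕜) :
    ‖WithLp.toLp 2 (star v)‖ = ‖WithLp.toLp 2 v‖ := by
  simp [EuclideanSpace.norm_eq]

namespace Matrix

variable {𝕜 : Type*} [RCLike 𝕜] {m n : Type*} [Fintype m] [Fintype n] [DecidableEq m]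
  [DecidableEq n]

theorem l2_opNorm_transpose_le (A : Matrix m n 𝕜) : ‖Aᵀ‖ ≤ ‖A‖ := by
  refine ContinuousLinearMap.opNorm_le_bound _ (norm_nonneg A) fun x => ?_
  have hconj : Aᵀ *ᵥ x.ofLp = star (Aᴴ *ᵥ star x.ofLp) := by
    rw [star_mulVec, star_star, conjTranspose_conjTranspose, mulVec_transpose]
  calc ‖WithLp.toLp 2 (Aᵀ *ᵥ x.ofLp)‖ = ‖WithLp.toLp 2 (Aᴴ *ᵥ star x.ofLp)‖ := by
        rw [hconj, EuclideanSpace.norm_toLp_star]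
    _ ≤ ‖Aᴴ‖ * ‖WithLp.toLp 2 (star x.ofLp)‖ := l2_opNorm_mulVec _ _
    _ = ‖A‖ * ‖x‖ := by rw [l2_opNorm_conjTranspose, EuclideanSpace.norm_toLp_star]

theorem l2_opNorm_transpose (A : Matrix m n 𝕜) : ‖Aᵀ‖ = ‖A‖ :=
  le_antisymm (l2_opNorm_transpose_le A) (by simpa using l2_opNorm_transpose_le Aᵀ)

theorem l2_opNorm_one_le : ‖(1 : Matrix n n 𝕜)‖ ≤ 1 := by
  rw [cstar_norm_def, map_one]
  exact ContinuousLinearMap.norm_id_le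

theorem l2_opNorm_transpose_mul_mul_le (B : Matrix m n 𝕜) (D : Matrix m m 𝕜) :
    ‖Bᵀ * D * B‖ ≤ ‖D‖ * ‖B‖ ^ 2 := by
  calc ‖Bᵀ * D * B‖ ≤ ‖Bᵀ‖ * ‖D‖ * ‖B‖ :=
        (l2_opNorm_mul _ _).trans (mul_le_mul_of_nonneg_right (l2_opNorm_mul _ _) (norm_nonneg _))
    _ = ‖D‖ * ‖B‖ ^ 2 := by rw [l2_opNorm_transpose]; ring

end Matrix

theorem stmt9_general (m k : ℕ) (H2 : Matrix (Fin m) (Fin m) ℂ) (Ho : Matrix (Fin k) (Fin m) ℂ)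
    (Hd : Matrix (Fin k) (Fin k) ℂ) (M1 M2 c : ℝ)
    (hc : M2 + M1 * M2 ^ 2 < c) (hH2 : IsUnit H2)
    (h1 : ‖H2⁻¹‖ ≤ M1) (h2 : ‖Ho‖ ≤ M2) (h3 : ‖Hd⁻¹‖ ≤ 1 / (c - M2)) :
    IsUnit (H2 - Hoᵀ * Hd⁻¹ * Ho) ∧
      ‖(H2 - Hoᵀ * Hd⁻¹ * Ho)⁻¹‖ ≤ (c - M2) * M1 / (c - M2 - M1 * M2 ^ 2) := by
  have hM1 : 0 ≤ M1 := (norm_nonneg _).trans h1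
  have hcM2 : M1 * M2 ^ 2 < c - M2 := by linarith
  have hcM2_pos : 0 < c - M2 := (by positivity : 0 ≤ M1 * M2 ^ 2).trans_lt hcM2
  have hSchur : ‖Hoᵀ * Hd⁻¹ * Ho‖ ≤ M2 ^ 2 / (c - M2) :=
    calc ‖Hoᵀ * Hd⁻¹ * Ho‖ ≤ ‖Hd⁻¹‖ * ‖Ho‖ ^ 2 := l2_opNorm_transpose_mul_mul_le Ho Hd⁻¹
      _ ≤ 1 / (c - M2) * M2 ^ 2 := by gcongr
      _ = M2 ^ 2 / (c - M2) := by ring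
  have hsmall : M1 * (M2 ^ 2 / (c - M2)) < 1 := by
    rwa [← mul_div_assoc, div_lt_one hcM2_pos]
  obtain ⟨hS, hSinv⟩ := isUnit_sub_and_norm_ringInverse_sub_le l2_opNorm_one_le hH2
    (by rwa [← nonsing_inv_eq_ringInverse]) hSchur hsmall
  refine ⟨hS, ?_⟩
  rw [nonsing_inv_eq_ringInverse]
  convert hSinv using 1
  field_simp

theorem stmt9 (m k : ℕ) (H2 : Matrix (Fin m) (Fin m) ℂ) (Ho : Matrix (Fin k) (Fin m) ℂ)
    (Hd : Matrix (Fin k) (Fin k) ℂ) (M1 M2 c : ℝ) (hM1 : 0 < M1) (hM2 : 0 < M2)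
    (hc : M2 + M1 * M2 ^ 2 < c) (hH2 : IsUnit H2) (hHd : IsUnit Hd)
    (h1 : ‖H2⁻¹‖ ≤ M1) (h2 : ‖Ho‖ ≤ M2) (h3 : ‖Hd⁻¹‖ ≤ 1 / (c - M2)) :
    IsUnit (H2 - Hoᵀ * Hd⁻¹ * Ho) ∧
      ‖(H2 - Hoᵀ * Hd⁻¹ * Ho)⁻¹‖ ≤ (c - M2) * M1 / (c - M2 - M1 * M2 ^ 2) :=
  stmt9_general m k H2 Ho Hd M1 M2 c hc hH2 h1 h2 h3
end
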